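/- The trilinear map H̄ is alternating, and its squared norm decomposes as |H̄|² = |H|² + 3|F|² + |[·,·]|², where |H̄|² := Σ_{a,b,c} H̄(e_a,e_b,e_c)² over any orthonormal basis (e_a) of V ⊕ 𝔨 for the product inner product g ⊕ g_𝔨, |H|² := Σ_{i,j,k} H(v_i,v_j,v_k)² over any g-orthonormal basis (v_i) of V, |F|² := Σ_{i,j} g_𝔨(F(v_i,v_j), F(v_i,v_j)), and |[·,·]|² := Σ_{j,k} g_𝔨([u_j,u_k],[u_j,u_k]) over any g_𝔨-orthonormal basis (u_j) of 𝔨. (This is the fibrewise form of the identity |H̄|² = |H|² + 3|F_A|² + |[·,·]|² for H̄ = p*H − CS(A) on the total space of a principal bundle.) -/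

import Mathlib

/-!
Fibrewise form of the identity `|H̄|² = |H|² + 3|F_A|² + |[·,·]|²` for
`H̄ = p*H − CS(A)` on the total space of a principal bundle, together with the fact
that `H̄` is alternating.
-/

namespace Stmt5

open scoped BigOperators

variable {V 𝓀 : Type*} [AddCommGroup V] [Module ℝ V] [FiniteDimensional ℝ V]
  [LieRing 𝓀] [LieAlgebra ℝ 𝓀] [FiniteDimensional ℝ 𝓀]

/-- The inner product `g_𝓀 := −⟨·,·⟩_𝓀` on the Lie algebra. -/
noncomputable def gkf (kk : 𝓀 →ₗ[ℝ] 𝓀 →ₗ[ℝ] ℝ) (u w : 𝓀) : ℝ := -(kk u w)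

/-- The trilinear map
`H̄(x₁+u₁, x₂+u₂, x₃+u₃) = H(x₁,x₂,x₃) + g_𝓀(F(x₁,x₂),u₃) + g_𝓀(F(x₂,x₃),u₁)
  + g_𝓀(F(x₃,x₁),u₂) − g_𝓀(u₁,[u₂,u₃])` on `V ⊕ 𝓀`. -/
noncomputable def Hbar (kk : 𝓀 →ₗ[ℝ] 𝓀 →ₗ[ℝ] ℝ)
    (H : V →ₗ[ℝ] V →ₗ[ℝ] V →ₗ[ℝ] ℝ) (F : V →ₗ[ℝ] V →ₗ[ℝ] 𝓀)
    (p q r : V × 𝓀) : ℝ :=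
  H p.1 q.1 r.1 + gkf kk (F p.1 q.1) r.2 + gkf kk (F q.1 r.1) p.2
    + gkf kk (F r.1 p.1) q.2 - gkf kk p.2 ⁅q.2, r.2⁆

/-! ### Auxiliary general lemmas about orthonormal bases -/

section Aux

variable {E : Type*} [AddCommGroup E] [Module ℝ E]

lemma repr_eq_of_on {ι : Type*} [Fintype ι] [DecidableEq ι]
    (Φ : E →ₗ[ℝ] E →ₗ[ℝ] ℝ) (b : Module.Basis ι ℝ E)
    (hON : ∀ i j, Φ (b i) (b j) = if i = j then 1 else 0)
    (x : E) (i : ι) : Φ x (b i) = b.repr x i := by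
  conv_lhs => rw [← b.sum_repr x]
  simp [map_sum, LinearMap.sum_apply, map_smul, LinearMap.smul_apply, smul_eq_mul, hON, -Module.Basis.sum_repr]

lemma parseval {ι : Type*} [Fintype ι] [DecidableEq ι]
    (Φ : E →ₗ[ℝ] E →ₗ[ℝ] ℝ) (b : Module.Basis ι ℝ E)
    (hON : ∀ i j, Φ (b i) (b j) = if i = j then 1 else 0)
    (x y : E) : ∑ i, Φ x (b i) * Φ y (b i) = Φ x y := by
  simp_rw [repr_eq_of_on Φ b hON]
  conv_rhs => rw [← b.sum_repr x, ← b.sum_repr y]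
  simp [map_sum, LinearMap.sum_apply, map_smul, LinearMap.smul_apply, smul_eq_mul, hON,
    Finset.mul_sum, mul_ite, mul_one, mul_zero, -Module.Basis.sum_repr]
  exact Finset.sum_congr rfl fun i _ => mul_comm _ _

lemma sum_sq_linear_eq {ι κ : Type*} [Fintype ι] [DecidableEq ι] [Fintype κ] [DecidableEq κ]
    (Φ : E →ₗ[ℝ] E →ₗ[ℝ] ℝ)
    (e : Module.Basis ι ℝ E) (f : Module.Basis κ ℝ E)
    (hONe : ∀ i j, Φ (e i) (e j) = if i = j then 1 else 0)
    (hONf : ∀ i j, Φ (f i) (f j) = if i = j then 1 else 0)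
    (ψ : E →ₗ[ℝ] ℝ) :
    ∑ a, (ψ (e a)) ^ 2 = ∑ m, (ψ (f m)) ^ 2 := by
  set w : E := ∑ a, ψ (e a) • e a with hw
  have hψ : ψ = Φ w := by
    refine e.ext fun a => ?_
    rw [hw]
    simp [map_sum, LinearMap.sum_apply, map_smul, LinearMap.smul_apply, smul_eq_mul, hONe]
  calc ∑ a, (ψ (e a)) ^ 2
      = ∑ a, Φ w (e a) * Φ w (e a) := by simp [hψ, pow_two]
    _ = Φ w w := parseval Φ e hONe w w
    _ = ∑ m, Φ w (f m) * Φ w (f m) := (parseval Φ f hONf w w).symm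
    _ = ∑ m, (ψ (f m)) ^ 2 := by simp [hψ, pow_two]

lemma tri_sum_eq {ι κ : Type*} [Fintype ι] [DecidableEq ι] [Fintype κ] [DecidableEq κ]
    (Φ : E →ₗ[ℝ] E →ₗ[ℝ] ℝ)
    (e : Module.Basis ι ℝ E) (f : Module.Basis κ ℝ E)
    (hONe : ∀ i j, Φ (e i) (e j) = if i = j then 1 else 0)
    (hONf : ∀ i j, Φ (f i) (f j) = if i = j then 1 else 0)
    (T : E →ₗ[ℝ] E →ₗ[ℝ] E →ₗ[ℝ] ℝ) :
    ∑ a, ∑ b, ∑ c, (T (e a) (e b) (e c)) ^ 2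
      = ∑ m, ∑ n, ∑ p, (T (f m) (f n) (f p)) ^ 2 := by
  have h3 : ∀ x y : E, ∑ c, (T x y (e c)) ^ 2 = ∑ p, (T x y (f p)) ^ 2 := fun x y =>
    sum_sq_linear_eq Φ e f hONe hONf (T x y)
  have h2 : ∀ x z : E, ∑ b, (T x (e b) z) ^ 2 = ∑ n, (T x (f n) z) ^ 2 := by
    intro x z
    have := sum_sq_linear_eq Φ e f hONe hONf ((T x).flip z)
    simpa [LinearMap.flip_apply] using this
  have h1 : ∀ y z : E, ∑ a, (T (e a) y z) ^ 2 = ∑ m, (T (f m) y z) ^ 2 := by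
    intro y z
    have := sum_sq_linear_eq Φ e f hONe hONf ((T.flip y).flip z)
    simpa [LinearMap.flip_apply] using this
  calc ∑ a, ∑ b, ∑ c, (T (e a) (e b) (e c)) ^ 2
      = ∑ a, ∑ b, ∑ p, (T (e a) (e b) (f p)) ^ 2 :=
        Finset.sum_congr rfl fun a _ => Finset.sum_congr rfl fun b _ => h3 _ _
    _ = ∑ a, ∑ p, ∑ b, (T (e a) (e b) (f p)) ^ 2 :=
        Finset.sum_congr rfl fun a _ => Finset.sum_comm
    _ = ∑ a, ∑ p, ∑ n, (T (e a) (f n) (f p)) ^ 2 :=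
        Finset.sum_congr rfl fun a _ => Finset.sum_congr rfl fun p _ => h2 _ _
    _ = ∑ p, ∑ a, ∑ n, (T (e a) (f n) (f p)) ^ 2 := Finset.sum_comm
    _ = ∑ p, ∑ n, ∑ a, (T (e a) (f n) (f p)) ^ 2 :=
        Finset.sum_congr rfl fun p _ => Finset.sum_comm
    _ = ∑ p, ∑ n, ∑ m, (T (f m) (f n) (f p)) ^ 2 :=
        Finset.sum_congr rfl fun p _ => Finset.sum_congr rfl fun n _ => h1 _ _
    _ = ∑ n, ∑ p, ∑ m, (T (f m) (f n) (f p)) ^ 2 := Finset.sum_comm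
    _ = ∑ n, ∑ m, ∑ p, (T (f m) (f n) (f p)) ^ 2 :=
        Finset.sum_congr rfl fun n _ => Finset.sum_comm
    _ = ∑ m, ∑ n, ∑ p, (T (f m) (f n) (f p)) ^ 2 := Finset.sum_comm

end Aux

/-! ### Bundled versions of the product metric and of `Hbar` -/

/-- The product inner product `g ⊕ g_𝓀` on `V × 𝓀`, as a bundled bilinear map. -/
noncomputable def GE (g : V →ₗ[ℝ] V →ₗ[ℝ] ℝ) (kk : 𝓀 →ₗ[ℝ] 𝓀 →ₗ[ℝ] ℝ) :
    (V × 𝓀) →ₗ[ℝ] (V × 𝓀) →ₗ[ℝ] ℝ where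
  toFun p :=
    { toFun := fun q => g p.1 q.1 + gkf kk p.2 q.2
      map_add' := by intro q q'; simp [gkf]; ring
      map_smul' := by intro c q; simp [gkf]; ring }
  map_add' := by
    intro p p'; refine LinearMap.ext fun q => ?_; simp [gkf]; ring
  map_smul' := by
    intro c p; refine LinearMap.ext fun q => ?_; simp [gkf]; ring

@[simp] lemma GE_apply (g : V →ₗ[ℝ] V →ₗ[ℝ] ℝ) (kk : 𝓀 →ₗ[ℝ] 𝓀 →ₗ[ℝ] ℝ) (p q : V × 𝓀) :
    GE g kk p q = g p.1 q.1 + gkf kk p.2 q.2 := rfl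

/-- `Hbar` as a bundled trilinear map. -/
noncomputable def HbarL (kk : 𝓀 →ₗ[ℝ] 𝓀 →ₗ[ℝ] ℝ)
    (H : V →ₗ[ℝ] V →ₗ[ℝ] V →ₗ[ℝ] ℝ) (F : V →ₗ[ℝ] V →ₗ[ℝ] 𝓀) :
    (V × 𝓀) →ₗ[ℝ] (V × 𝓀) →ₗ[ℝ] (V × 𝓀) →ₗ[ℝ] ℝ where
  toFun p :=
    { toFun := fun q =>
        { toFun := fun r => Hbar kk H F p q r
          map_add' := by intro r r'; simp [Hbar, gkf]; ring
          map_smul' := by intro c r; simp [Hbar, gkf, smul_lie, lie_smul]; ring }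
      map_add' := by
        intro q q'; refine LinearMap.ext fun r => ?_; simp [Hbar, gkf]; ring
      map_smul' := by
        intro c q; refine LinearMap.ext fun r => ?_
        simp [Hbar, gkf, smul_lie, lie_smul]; ring }
  map_add' := by
    intro p p'; refine LinearMap.ext fun q => LinearMap.ext fun r => ?_
    simp [Hbar, gkf]; ring
  map_smul' := by
    intro c p; refine LinearMap.ext fun q => LinearMap.ext fun r => ?_
    simp [Hbar, gkf, smul_lie, lie_smul]; ring

@[simp] lemma HbarL_apply (kk : 𝓀 →ₗ[ℝ] 𝓀 →ₗ[ℝ] ℝ)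
    (H : V →ₗ[ℝ] V →ₗ[ℝ] V →ₗ[ℝ] ℝ) (F : V →ₗ[ℝ] V →ₗ[ℝ] 𝓀) (p q r : V × 𝓀) :
    HbarL kk H F p q r = Hbar kk H F p q r := rfl

set_option maxRecDepth 8000 in
set_option maxHeartbeats 1600000 in
theorem statement5
    (g : V →ₗ[ℝ] V →ₗ[ℝ] ℝ) (hg_symm : ∀ x y : V, g x y = g y x)
    (hg_pos : ∀ x : V, x ≠ 0 → 0 < g x x)
    (kk : 𝓀 →ₗ[ℝ] 𝓀 →ₗ[ℝ] ℝ) (hkk_symm : ∀ x y : 𝓀, kk x y = kk y x)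
    (hkk_neg : ∀ x : 𝓀, x ≠ 0 → kk x x < 0)
    (hkk_ad : ∀ x y z : 𝓀, kk ⁅x, y⁆ z = -(kk y ⁅x, z⁆))
    (H : V →ₗ[ℝ] V →ₗ[ℝ] V →ₗ[ℝ] ℝ)
    (hH12 : ∀ x y z : V, H x y z = -(H y x z))
    (hH23 : ∀ x y z : V, H x y z = -(H x z y))
    (F : V →ₗ[ℝ] V →ₗ[ℝ] 𝓀) (hF : ∀ x y : V, F x y = -(F y x)) :
    -- `H̄` is alternating
    (∀ p q r : V × 𝓀, Hbar kk H F p q r = -(Hbar kk H F q p r) ∧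
      Hbar kk H F p q r = -(Hbar kk H F p r q)) ∧
    -- the squared-norm decomposition `|H̄|² = |H|² + 3|F|² + |[·,·]|²`
    ∀ (ιV ι𝓀 ιE : Type) [Fintype ιV] [Fintype ι𝓀] [Fintype ιE]
      [DecidableEq ιV] [DecidableEq ι𝓀] [DecidableEq ιE]
      (v : Module.Basis ιV ℝ V) (u : Module.Basis ι𝓀 ℝ 𝓀) (e : Module.Basis ιE ℝ (V × 𝓀)),
      (∀ i j, g (v i) (v j) = if i = j then 1 else 0) →
      (∀ i j, gkf kk (u i) (u j) = if i = j then 1 else 0) →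
      (∀ a b, g (e a).1 (e b).1 + gkf kk (e a).2 (e b).2 = if a = b then 1 else 0) →
      (∑ a, ∑ b, ∑ c, (Hbar kk H F (e a) (e b) (e c)) ^ 2) =
        (∑ i, ∑ j, ∑ l, (H (v i) (v j) (v l)) ^ 2)
          + 3 * (∑ i, ∑ j, gkf kk (F (v i) (v j)) (F (v i) (v j)))
          + (∑ j, ∑ l, gkf kk ⁅u j, u l⁆ ⁅u j, u l⁆) := by
  have key : ∀ x y z : 𝓀, kk x ⁅y, z⁆ = -(kk y ⁅x, z⁆) := by
    intro x y z
    have h1 : kk ⁅y, z⁆ x = -(kk z ⁅y, x⁆) := hkk_ad y z x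
    have h2 : kk ⁅x, z⁆ y = -(kk z ⁅x, y⁆) := hkk_ad x z y
    have hskew : (⁅y, x⁆ : 𝓀) = -⁅x, y⁆ := by rw [← lie_skew x y, neg_neg]
    have h3 : kk z ⁅y, x⁆ = -(kk z ⁅x, y⁆) := by rw [hskew]; exact map_neg _ _
    have h4 : kk x ⁅y, z⁆ = kk ⁅y, z⁆ x := hkk_symm _ _
    have h5 : kk y ⁅x, z⁆ = kk ⁅x, z⁆ y := hkk_symm _ _
    linarith
  constructor
  · intro p q r
    constructor
    · have a1 : H p.1 q.1 r.1 = -(H q.1 p.1 r.1) := hH12 _ _ _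
      have a2 : kk (F p.1 q.1) r.2 = -(kk (F q.1 p.1) r.2) := by rw [hF p.1 q.1]; simp
      have a3 : kk (F q.1 r.1) p.2 = -(kk (F r.1 q.1) p.2) := by rw [hF q.1 r.1]; simp
      have a4 : kk (F r.1 p.1) q.2 = -(kk (F p.1 r.1) q.2) := by rw [hF r.1 p.1]; simp
      have a5 : kk p.2 ⁅q.2, r.2⁆ = -(kk q.2 ⁅p.2, r.2⁆) := key _ _ _
      simp only [Hbar, gkf]
      linarith
    · have a1 : H p.1 q.1 r.1 = -(H p.1 r.1 q.1) := hH23 _ _ _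
      have a2 : kk (F p.1 q.1) r.2 = -(kk (F q.1 p.1) r.2) := by rw [hF p.1 q.1]; simp
      have a3 : kk (F q.1 r.1) p.2 = -(kk (F r.1 q.1) p.2) := by rw [hF q.1 r.1]; simp
      have a4 : kk (F r.1 p.1) q.2 = -(kk (F p.1 r.1) q.2) := by rw [hF r.1 p.1]; simp
      have hskew : (⁅r.2, q.2⁆ : 𝓀) = -⁅q.2, r.2⁆ := by rw [← lie_skew q.2 r.2, neg_neg]
      have a5 : kk p.2 ⁅r.2, q.2⁆ = -(kk p.2 ⁅q.2, r.2⁆) := by rw [hskew]; exact map_neg _ _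
      simp only [Hbar, gkf]
      linarith
  · intro ιV ι𝓀 ιE _ _ _ _ _ _ v u e hv hu he
    -- orthonormality of `e` and of the product basis `v.prod u` for `GE`
    have hONe : ∀ a b, GE g kk (e a) (e b) = if a = b then 1 else 0 := by
      intro a b; rw [GE_apply]; exact he a b
    set f : Module.Basis (ιV ⊕ ι𝓀) ℝ (V × 𝓀) := v.prod u with hf
    have hONu : ∀ i j, (-kk) (u i) (u j) = if i = j then 1 else 0 := by
      intro i j
      have := hu i j
      simpa [gkf] using this
    have hONf : ∀ m n, GE g kk (f m) (f n) = if m = n then 1 else 0 := by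
      intro m n
      rcases m with i | i <;> rcases n with j | j <;>
        simp [hf, GE_apply, Module.Basis.prod_apply_inl_fst, Module.Basis.prod_apply_inl_snd,
          Module.Basis.prod_apply_inr_fst, Module.Basis.prod_apply_inr_snd, gkf, hv, hu]
      · have := hu i j; simp [gkf] at this; linarith [this]
    -- change basis from `e` to `f`
    have hchg := tri_sum_eq (GE g kk) e f hONe hONf (HbarL kk H F)
    simp only [HbarL_apply] at hchg
    rw [hchg]
    -- values of `Hbar` on the product basis
    have b111 : ∀ i j l, Hbar kk H F (f (Sum.inl i)) (f (Sum.inl j)) (f (Sum.inl l))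
        = H (v i) (v j) (v l) := by
      intro i j l; simp [hf, Hbar, gkf]
    have b112 : ∀ i j l, Hbar kk H F (f (Sum.inl i)) (f (Sum.inl j)) (f (Sum.inr l))
        = gkf kk (F (v i) (v j)) (u l) := by
      intro i j l; simp [hf, Hbar, gkf]
    have b121 : ∀ i j l, Hbar kk H F (f (Sum.inl i)) (f (Sum.inr j)) (f (Sum.inl l))
        = gkf kk (F (v l) (v i)) (u j) := by
      intro i j l; simp [hf, Hbar, gkf]
    have b211 : ∀ i j l, Hbar kk H F (f (Sum.inr i)) (f (Sum.inl j)) (f (Sum.inl l))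
        = gkf kk (F (v j) (v l)) (u i) := by
      intro i j l; simp [hf, Hbar, gkf]
    have b122 : ∀ i j l, Hbar kk H F (f (Sum.inl i)) (f (Sum.inr j)) (f (Sum.inr l))
        = 0 := by
      intro i j l; simp [hf, Hbar, gkf]
    have b212 : ∀ i j l, Hbar kk H F (f (Sum.inr i)) (f (Sum.inl j)) (f (Sum.inr l))
        = 0 := by
      intro i j l; simp [hf, Hbar, gkf]
    have b221 : ∀ i j l, Hbar kk H F (f (Sum.inr i)) (f (Sum.inr j)) (f (Sum.inl l))
        = 0 := by
      intro i j l; simp [hf, Hbar, gkf]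
    have b222 : ∀ i j l, Hbar kk H F (f (Sum.inr i)) (f (Sum.inr j)) (f (Sum.inr l))
        = -(gkf kk (u i) ⁅u j, u l⁆) := by
      intro i j l; simp [hf, Hbar, gkf]
    -- Parseval in the fibre
    have hpar : ∀ w : 𝓀, ∑ l, (gkf kk w (u l)) ^ 2 = gkf kk w w := by
      intro w
      have := parseval (-kk) u hONu w w
      calc ∑ l, (gkf kk w (u l)) ^ 2 = ∑ l, (-kk) w (u l) * (-kk) w (u l) := by
            refine Finset.sum_congr rfl fun l _ => ?_
            simp [gkf, pow_two]
        _ = (-kk) w w := this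
        _ = gkf kk w w := by simp [gkf]
    have hpar' : ∀ w : 𝓀, ∑ l, (gkf kk (u l) w) ^ 2 = gkf kk w w := by
      intro w
      rw [← hpar w]
      refine Finset.sum_congr rfl fun l _ => ?_
      simp [gkf, hkk_symm]
    -- split the sums over the sum type and evaluate each block
    rw [Fintype.sum_sum_type]
    simp only [Fintype.sum_sum_type]
    simp only [b111, b112, b121, b211, b122, b212, b221, b222]
    simp only [Finset.sum_add_distrib, neg_sq]
    -- now massage the remaining sums
    have TA : ∀ i j : ιV, ∑ l, (gkf kk (F (v i) (v j)) (u l)) ^ 2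
        = gkf kk (F (v i) (v j)) (F (v i) (v j)) := fun i j => hpar _
    -- block with the 𝓀-index in the middle slot
    have TB : (∑ i : ιV, ∑ j : ι𝓀, ∑ l : ιV, (gkf kk (F (v l) (v i)) (u j)) ^ 2)
        = ∑ i, ∑ j, gkf kk (F (v i) (v j)) (F (v i) (v j)) := by
      calc (∑ i : ιV, ∑ j : ι𝓀, ∑ l : ιV, (gkf kk (F (v l) (v i)) (u j)) ^ 2)
          = ∑ i : ιV, ∑ l : ιV, ∑ j : ι𝓀, (gkf kk (F (v l) (v i)) (u j)) ^ 2 :=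
            Finset.sum_congr rfl fun i _ => Finset.sum_comm
        _ = ∑ i : ιV, ∑ l : ιV, gkf kk (F (v l) (v i)) (F (v l) (v i)) :=
            Finset.sum_congr rfl fun i _ => Finset.sum_congr rfl fun l _ => hpar _
        _ = ∑ i, ∑ j, gkf kk (F (v i) (v j)) (F (v i) (v j)) := Finset.sum_comm
    have TC : (∑ i : ι𝓀, ∑ j : ιV, ∑ l : ιV, (gkf kk (F (v j) (v l)) (u i)) ^ 2)
        = ∑ i, ∑ j, gkf kk (F (v i) (v j)) (F (v i) (v j)) := by
      calc (∑ i : ι𝓀, ∑ j : ιV, ∑ l : ιV, (gkf kk (F (v j) (v l)) (u i)) ^ 2)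
          = ∑ j : ιV, ∑ i : ι𝓀, ∑ l : ιV, (gkf kk (F (v j) (v l)) (u i)) ^ 2 :=
            Finset.sum_comm
        _ = ∑ j : ιV, ∑ l : ιV, ∑ i : ι𝓀, (gkf kk (F (v j) (v l)) (u i)) ^ 2 :=
            Finset.sum_congr rfl fun j _ => Finset.sum_comm
        _ = ∑ j, ∑ l, gkf kk (F (v j) (v l)) (F (v j) (v l)) :=
            Finset.sum_congr rfl fun j _ => Finset.sum_congr rfl fun l _ => hpar _
    have TD : (∑ i : ι𝓀, ∑ j : ι𝓀, ∑ l : ι𝓀, (gkf kk (u i) ⁅u j, u l⁆) ^ 2)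
        = ∑ j, ∑ l, gkf kk ⁅u j, u l⁆ ⁅u j, u l⁆ := by
      calc (∑ i : ι𝓀, ∑ j : ι𝓀, ∑ l : ι𝓀, (gkf kk (u i) ⁅u j, u l⁆) ^ 2)
          = ∑ j : ι𝓀, ∑ i : ι𝓀, ∑ l : ι𝓀, (gkf kk (u i) ⁅u j, u l⁆) ^ 2 :=
            Finset.sum_comm
        _ = ∑ j : ι𝓀, ∑ l : ι𝓀, ∑ i : ι𝓀, (gkf kk (u i) ⁅u j, u l⁆) ^ 2 :=
            Finset.sum_congr rfl fun j _ => Finset.sum_comm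
        _ = ∑ j, ∑ l, gkf kk ⁅u j, u l⁆ ⁅u j, u l⁆ :=
            Finset.sum_congr rfl fun j _ => Finset.sum_congr rfl fun l _ => hpar' _
    simp only [ne_eq, OfNat.ofNat_ne_zero, not_false_eq_true, zero_pow,
      Finset.sum_const_zero, add_zero, zero_add]
    rw [TB, TC, TD]
    simp only [TA]
    ring

end Stmt5
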